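/- Dimension of the kernel of a nondegenerate operator: let L be a nondegenerate differential operator of order m on the superline. Then Ker L = {ψ ∈ A : Lψ = 0} is a real vector space of dimension m. Moreover, if each coefficient aᵢ of L = a_mD^m + ⋯ + a₀ is homogeneous of parity m−i (mod 2) (so that L is parity-homogeneous and Ker L is graded), then the even part of Ker L has dimension n and the odd part dimension n when m = 2n, and the even part has dimension n+1 and the odd part dimension n when m = 2n+1; i.e., dim Ker L = n|n for m = 2n and dim Ker L = (n+1)|n for m = 2n+1. -/

import Mathlib

noncomputable section
set_option synthInstance.maxHeartbeats 1000000
set_option maxHeartbeats 1000000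

open TrivSqZeroExt

/-- Smooth real functions on the line, as a subalgebra of `ℝ → ℝ`. -/
def SmoothR : Subalgebra ℝ (ℝ → ℝ) where
  carrier := {f | ContDiff ℝ (⊤ : ℕ∞) f}
  mul_mem' := fun {a b} (ha : ContDiff ℝ (⊤ : ℕ∞) a) (hb : ContDiff ℝ (⊤ : ℕ∞) b) => ha.mul hb
  add_mem' := fun {a b} (ha : ContDiff ℝ (⊤ : ℕ∞) a) (hb : ContDiff ℝ (⊤ : ℕ∞) b) => ha.add hb
  algebraMap_mem' := fun c => show ContDiff ℝ (⊤ : ℕ∞) (fun _ => c) from contDiff_const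

lemma SmoothR.contDiff (f : SmoothR) : ContDiff ℝ (⊤ : ℕ∞) (f : ℝ → ℝ) := f.2

lemma SmoothR.differentiable (f : SmoothR) : Differentiable ℝ (f : ℝ → ℝ) :=
  (SmoothR.contDiff f).differentiable (by simp)

/-- The ring `A` of superline functions: `f = f₀ + ξ f₁`. -/
abbrev SuperA : Type := TrivSqZeroExt SmoothR SmoothR


/-- Differentiation `f ↦ f′` on smooth functions, as an ℝ-linear map. -/
def derivSm : SmoothR →ₗ[ℝ] SmoothR where
  toFun f := ⟨deriv (f : ℝ → ℝ), (contDiff_infty_iff_deriv.mp (SmoothR.contDiff f)).2⟩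
  map_add' f g := by
    ext x
    exact deriv_add ((SmoothR.differentiable f) x) ((SmoothR.differentiable g) x)
  map_smul' c f := by
    ext x
    have h := deriv_const_smul (f := (f : ℝ → ℝ)) c ((SmoothR.differentiable f) x)
    have : deriv (c • (f : ℝ → ℝ)) x = c • deriv (f : ℝ → ℝ) x := by
      simpa [Pi.smul_def] using h
    simp_all

/-- The odd vector field `D = ∂_ξ + ξ ∂_x`, i.e. `D(f₀ + ξ f₁) = f₁ + ξ f₀′`. -/
def D : Module.End ℝ SuperA where
  toFun f := inl (snd f) + inr (derivSm (fst f))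
  map_add' f g := by apply TrivSqZeroExt.ext <;> simp
  map_smul' c f := by apply TrivSqZeroExt.ext <;> simp

/-- Multiplication by `a ∈ A` as an ℝ-linear endomorphism of `A`. -/
def mulOp (a : SuperA) : Module.End ℝ SuperA := LinearMap.mulLeft ℝ a

/-- `L` is a differential operator on the superline of order `≤ m`:
`L = a_m D^m + ⋯ + a₀`. -/
def IsOpOfOrderLE (L : Module.End ℝ SuperA) (m : ℕ) : Prop :=
  ∃ a : Fin (m + 1) → SuperA, L = ∑ i : Fin (m + 1), mulOp (a i) * D ^ (i : ℕ)

/-- `L` is a differential operator on the superline (of some order). -/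
def IsDiffOp (L : Module.End ℝ SuperA) : Prop := ∃ m, IsOpOfOrderLE L m

/-- `L` is a differential operator of order `< m` (i.e. of order `≤ m − 1`;
for `m = 0` this means `L = 0`). -/
def IsOpOfOrderLT (L : Module.End ℝ SuperA) (m : ℕ) : Prop :=
  ∃ a : Fin m → SuperA, L = ∑ i : Fin m, mulOp (a i) * D ^ (i : ℕ)

/-- `L` is a nondegenerate operator of order `m`: the top coefficient `a_m`
is invertible in `A`. -/
def IsNondegOfOrder (L : Module.End ℝ SuperA) (m : ℕ) : Prop :=
  ∃ a : Fin (m + 1) → SuperA, IsUnit (a (Fin.last m)) ∧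
    L = ∑ i : Fin (m + 1), mulOp (a i) * D ^ (i : ℕ)

/-- `L` is a monic operator of order `m`: the top coefficient `a_m` equals `1`. -/
def IsMonicOfOrder (L : Module.End ℝ SuperA) (m : ℕ) : Prop :=
  ∃ a : Fin (m + 1) → SuperA, a (Fin.last m) = 1 ∧
    L = ∑ i : Fin (m + 1), mulOp (a i) * D ^ (i : ℕ)

/-- `f = f₀ + ξ f₁` is even iff `f₁ = 0`. -/
def SuperA.IsEven (f : SuperA) : Prop := snd f = 0

/-- `f = f₀ + ξ f₁` is odd iff `f₀ = 0`. -/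
def SuperA.IsOdd (f : SuperA) : Prop := fst f = 0

/-- `f = f₀ + ξ f₁` is constant iff `f₁ = 0` and `f₀` is a constant function. -/
def SuperA.IsConstant (f : SuperA) : Prop :=
  snd f = 0 ∧ ∃ c : ℝ, ∀ x : ℝ, ((fst f : SmoothR) : ℝ → ℝ) x = c

/-- The first-order operator `M_φ = D − (Dφ)φ⁻¹ = φ ∘ D ∘ φ⁻¹`. -/
def Mphi (φ : SuperA) : Module.End ℝ SuperA := D - mulOp (D φ * Ring.inverse φ)

/-- The even part `{f | f₁ = 0}` of `A`, as a real subspace. -/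
def evenPart : Submodule ℝ SuperA where
  carrier := {f | snd f = 0}
  add_mem' := by
    intro a b (ha : snd a = 0) (hb : snd b = 0)
    show snd (a + b) = 0
    simp [ha, hb]
  zero_mem' := by
    show snd (0 : SuperA) = 0
    simp
  smul_mem' := by
    intro c a (ha : snd a = 0)
    show snd (c • a) = 0
    simp [ha]

/-- The odd part `{f | f₀ = 0}` of `A`, as a real subspace. -/
def oddPart : Submodule ℝ SuperA where
  carrier := {f | fst f = 0}
  add_mem' := by
    intro a b (ha : fst a = 0) (hb : fst b = 0)
    show fst (a + b) = 0
    simp [ha, hb]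
  zero_mem' := by
    show fst (0 : SuperA) = 0
    simp
  smul_mem' := by
    intro c a (ha : fst a = 0)
    show fst (c • a) = 0
    simp [ha]


section OdeCore
open Set Filter Topology intervalIntegral MeasureTheory Function

variable {E : Type*} [NormedAddCommGroup E] [NormedSpace ℝ E] [CompleteSpace E]

/-- clamp to `[-R,R]` -/
def clampR (R : ℝ) (x : ℝ) : ℝ := max (-R) (min R x)

lemma clampR_mem {R : ℝ} (hR : 0 ≤ R) (x : ℝ) : clampR R x ∈ Icc (-R) R := by
  constructor
  · exact le_max_left _ _
  · rcases le_total R x with h | h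
    · simp [clampR, min_eq_left h, max_le_iff]; linarith
    · simp [clampR, min_eq_right h, max_le_iff]; exact ⟨by linarith, h⟩

lemma clampR_eq {R x : ℝ} (hx : x ∈ Icc (-R) R) : clampR R x = x := by
  simp only [clampR, min_eq_right hx.2, max_eq_right hx.1]

lemma continuous_clampR {R : ℝ} : Continuous (clampR R) :=
  continuous_const.max (continuous_const.min continuous_id)

theorem linODE_unique_Ioo {A : ℝ → E →L[ℝ] E} (hA : Continuous A) {R : ℝ} (hR : 0 < R)
    {y z : ℝ → E}
    (hy : ∀ x ∈ Ioo (-R) R, HasDerivAt y (A x (y x)) x)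
    (hz : ∀ x ∈ Ioo (-R) R, HasDerivAt z (A x (z x)) x)
    (h0 : y 0 = z 0) : EqOn y z (Ioo (-R) R) := by
  obtain ⟨C, hC⟩ := (isCompact_Icc (a := -R) (b := R)).exists_bound_of_continuousOn
    hA.continuousOn
  set K : NNReal := ⟨max C 0, le_max_right _ _⟩ with hK
  have hlip : ∀ t : ℝ, LipschitzOnWith K (fun w => A (clampR R t) w) univ := by
    intro t
    refine ((A (clampR R t)).lipschitz.weaken ?_).lipschitzOnWith
    have h1 := hC _ (clampR_mem hR.le t)
    rw [← NNReal.coe_le_coe]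
    simp only [coe_nnnorm, hK, NNReal.coe_mk]
    exact le_trans h1 (le_max_left _ _)
  have key := ODE_solution_unique_of_mem_Ioo (v := fun t w => A (clampR R t) w)
    (s := fun _ => (univ : Set E)) (fun t _ => hlip t) (t₀ := 0) ⟨neg_lt_zero.2 hR, hR⟩
    (f := y) (g := z) ?_ ?_ h0
  · exact key
  · intro t ht
    refine ⟨?_, mem_univ _⟩
    show HasDerivAt y ((A (clampR R t)) (y t)) t
    rw [clampR_eq (Ioo_subset_Icc_self ht)]
    exact hy t ht
  · intro t ht
    refine ⟨?_, mem_univ _⟩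
    show HasDerivAt z ((A (clampR R t)) (z t)) t
    rw [clampR_eq (Ioo_subset_Icc_self ht)]
    exact hz t ht

set_option maxHeartbeats 1000000 in
theorem linODE_exists_Icc {A : ℝ → E →L[ℝ] E} (hA : Continuous A) {R : ℝ} (hR : 0 < R)
    (v₀ : E) :
    ∃ y : ℝ → E, Continuous y ∧ ∀ t ∈ Icc (-R) R, y t = v₀ + ∫ s in (0:ℝ)..t, A s (y s) := by
  have hle : (-R) ≤ R := by linarith
  haveI : Nonempty (Icc (-R) R) := ⟨⟨0, by constructor <;> linarith⟩⟩
  -- the extension of a continuous map on Icc to ℝ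
  set ext : C(Icc (-R) R, E) → ℝ → E := fun y s => y (projIcc (-R) R hle s) with hext
  have hextc : ∀ y : C(Icc (-R) R, E), Continuous (ext y) := fun y =>
    y.continuous.comp continuous_projIcc
  have hgc : ∀ y : C(Icc (-R) R, E), Continuous fun s => A s (ext y s) := fun y =>
    hA.clm_apply (hextc y)
  -- the Picard operator
  set T : C(Icc (-R) R, E) → C(Icc (-R) R, E) := fun y =>
    ⟨fun t => v₀ + ∫ s in (0:ℝ)..(t:ℝ), A s (ext y s),
      (continuous_const.add (intervalIntegral.continuous_primitive
        (fun a b => (hgc y).intervalIntegrable a b) 0)).comp continuous_subtype_val⟩ with hT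
  obtain ⟨C₀, hC₀⟩ := (isCompact_Icc (a := -R) (b := R)).exists_bound_of_continuousOn
    hA.continuousOn
  set C : ℝ := max C₀ 0 with hCdef
  have hCnn : 0 ≤ C := le_max_right _ _
  have hC : ∀ s ∈ Icc (-R) R, ‖A s‖ ≤ C := fun s hs => le_trans (hC₀ s hs) (le_max_left _ _)
  -- the key iterate estimate
  have key : ∀ (n : ℕ) (y z : C(Icc (-R) R, E)) (t : Icc (-R) R),
      ‖T^[n] y t - T^[n] z t‖ ≤ C ^ n * |(t : ℝ)| ^ n / n.factorial * dist y z := by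
    intro n
    induction n with
    | zero =>
      intro y z t
      simpa [dist_eq_norm] using ContinuousMap.dist_apply_le_dist (f := y) (g := z) t
    | succ n ih =>
      intro y z t
      rw [iterate_succ_apply', iterate_succ_apply']
      set u := T^[n] y with hu
      set w := T^[n] z with hw
      have hsub : T u t - T w t
          = ∫ s in (0:ℝ)..(t:ℝ), (A s (ext u s) - A s (ext w s)) := by
        show (v₀ + ∫ s in (0:ℝ)..(t:ℝ), A s (ext u s))
            - (v₀ + ∫ s in (0:ℝ)..(t:ℝ), A s (ext w s)) = _
        rw [add_sub_add_left_eq_sub, intervalIntegral.integral_sub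
          ((hgc u).intervalIntegrable _ _) ((hgc w).intervalIntegrable _ _)]
      have hptw : ∀ s ∈ Icc (-R) R,
          ‖A s (ext u s) - A s (ext w s)‖ ≤ C ^ (n+1) * |s| ^ n / n.factorial * dist y z := by
        intro s hs
        have h1 : ‖A s (ext u s) - A s (ext w s)‖ ≤ ‖A s‖ * ‖ext u s - ext w s‖ := by
          rw [← map_sub]
          exact (A s).le_opNorm _
        have h2 : ‖ext u s - ext w s‖ ≤ C ^ n * |s| ^ n / n.factorial * dist y z := by
          have := ih y z (projIcc (-R) R hle s)
          rw [← hu, ← hw] at this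
          simpa [hext, projIcc_of_mem hle hs] using this
        calc ‖A s (ext u s) - A s (ext w s)‖ ≤ ‖A s‖ * ‖ext u s - ext w s‖ := h1
          _ ≤ C * (C ^ n * |s| ^ n / n.factorial * dist y z) := by
              apply mul_le_mul (hC s hs) h2 (norm_nonneg _)
              exact hCnn
          _ = C ^ (n+1) * |s| ^ n / n.factorial * dist y z := by ring
      rw [hsub]
      have hnorm_cont : Continuous fun s => ‖A s (ext u s) - A s (ext w s)‖ :=
        ((hgc u).sub (hgc w)).norm
      have hb_cont : Continuous fun s : ℝ => C ^ (n+1) * |s| ^ n / n.factorial * dist y z :=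
        by continuity
      rcases le_total (0:ℝ) (t:ℝ) with h0t | ht0
      · calc ‖∫ s in (0:ℝ)..(t:ℝ), (A s (ext u s) - A s (ext w s))‖
            ≤ ∫ s in (0:ℝ)..(t:ℝ), ‖A s (ext u s) - A s (ext w s)‖ :=
              intervalIntegral.norm_integral_le_integral_norm h0t
          _ ≤ ∫ s in (0:ℝ)..(t:ℝ), C ^ (n+1) * |s| ^ n / n.factorial * dist y z := by
              apply intervalIntegral.integral_mono_on h0t
                (hnorm_cont.intervalIntegrable _ _) (hb_cont.intervalIntegrable _ _)
              intro s hs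
              exact hptw s ⟨by linarith [hs.1], le_trans hs.2 t.2.2⟩
          _ = ∫ s in (0:ℝ)..(t:ℝ), C ^ (n+1) * s ^ n / n.factorial * dist y z := by
              apply intervalIntegral.integral_congr
              intro s hs
              rw [uIcc_of_le h0t] at hs
              simp [abs_of_nonneg hs.1]
          _ = C ^ (n+1) * ((t:ℝ) ^ (n+1) / (n+1)) / n.factorial * dist y z := by
              rw [intervalIntegral.integral_mul_const, intervalIntegral.integral_div,
                intervalIntegral.integral_const_mul, integral_pow]
              simp
          _ = C ^ (n+1) * |(t:ℝ)| ^ (n+1) / (n+1).factorial * dist y z := by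
              rw [abs_of_nonneg h0t, Nat.factorial_succ]
              have hfp : ((n:ℝ)+1) ≠ 0 := by positivity
              have hfp2 : (n.factorial : ℝ) ≠ 0 := by
                exact_mod_cast Nat.factorial_ne_zero n
              push_cast
              field_simp
      · calc ‖∫ s in (0:ℝ)..(t:ℝ), (A s (ext u s) - A s (ext w s))‖
            = ‖∫ s in (t:ℝ)..(0:ℝ), (A s (ext u s) - A s (ext w s))‖ := by
              conv_lhs => rw [intervalIntegral.integral_symm]
              rw [norm_neg]
          _ ≤ ∫ s in (t:ℝ)..(0:ℝ), ‖A s (ext u s) - A s (ext w s)‖ :=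
              intervalIntegral.norm_integral_le_integral_norm ht0
          _ ≤ ∫ s in (t:ℝ)..(0:ℝ), C ^ (n+1) * |s| ^ n / n.factorial * dist y z := by
              apply intervalIntegral.integral_mono_on ht0
                (hnorm_cont.intervalIntegrable _ _) (hb_cont.intervalIntegrable _ _)
              intro s hs
              exact hptw s ⟨le_trans t.2.1 hs.1, by linarith [hs.2]⟩
          _ = ∫ s in (t:ℝ)..(0:ℝ), C ^ (n+1) * (-s) ^ n / n.factorial * dist y z := by
              apply intervalIntegral.integral_congr
              intro s hs
              rw [uIcc_of_le ht0] at hs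
              simp [abs_of_nonpos hs.2]
          _ = C ^ (n+1) * ((-(t:ℝ)) ^ (n+1) / (n+1)) / n.factorial * dist y z := by
              have hcn := intervalIntegral.integral_comp_neg (a := (t:ℝ)) (b := (0:ℝ))
                (fun s => C ^ (n+1) * s ^ n / n.factorial * dist y z)
              simp only [neg_zero] at hcn
              rw [show (fun s => C ^ (n+1) * (-s) ^ n / n.factorial * dist y z)
                  = (fun s => (fun r => C ^ (n+1) * r ^ n / n.factorial * dist y z) (-s))
                  from rfl, hcn, intervalIntegral.integral_mul_const,
                intervalIntegral.integral_div, intervalIntegral.integral_const_mul,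
                integral_pow]
              simp
          _ = C ^ (n+1) * |(t:ℝ)| ^ (n+1) / (n+1).factorial * dist y z := by
              rw [abs_of_nonpos ht0, Nat.factorial_succ]
              have hfp2 : (n.factorial : ℝ) ≠ 0 := by
                exact_mod_cast Nat.factorial_ne_zero n
              push_cast
              field_simp
  -- choose N with (C*R)^N / N! < 1
  have htend := FloorSemiring.tendsto_pow_div_factorial_atTop (C * R)
  have hev : ∀ᶠ n : ℕ in atTop, (C*R) ^ n / (n.factorial : ℝ) < 1 :=
    htend.eventually_lt_const (by norm_num)
  obtain ⟨N, hN⟩ := hev.exists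
  set q : NNReal := ⟨(C*R) ^ N / (N.factorial : ℝ), by positivity⟩ with hq
  have hcontr : ContractingWith q (T^[N]) := by
    constructor
    · exact_mod_cast hN
    · apply LipschitzWith.of_dist_le_mul
      intro y z
      rw [ContinuousMap.dist_le (by positivity)]
      intro t
      rw [dist_eq_norm]
      refine le_trans (key N y z t) ?_
      have habs : |(t:ℝ)| ≤ R := abs_le.2 ⟨t.2.1, t.2.2⟩
      calc C ^ N * |(t:ℝ)| ^ N / N.factorial * dist y z
          ≤ C ^ N * R ^ N / N.factorial * dist y z := by
            gcongr
          _ = (q : ℝ) * dist y z := by show _ = ((C*R) ^ N / (N.factorial : ℝ)) * dist y z; rw [mul_pow]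
  set ystar := hcontr.fixedPoint (T^[N]) with hystar
  have hfix : T ystar = ystar := hcontr.isFixedPt_fixedPoint_iterate
  refine ⟨ext ystar, hextc ystar, ?_⟩
  intro t ht
  have h1 : ext ystar t = ystar ⟨t, ht⟩ := by
    simp [hext, projIcc_of_mem hle ht]
  rw [h1]
  conv_lhs => rw [← hfix]
  rfl

theorem linODE_exists {A : ℝ → E →L[ℝ] E} (hA : Continuous A) (v₀ : E) :
    ∃ y : ℝ → E, y 0 = v₀ ∧ ∀ x, HasDerivAt y (A x (y x)) x := by
  have H : ∀ n : ℕ, ∃ y : ℝ → E, y 0 = v₀ ∧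
      ∀ x ∈ Ioo (-((n:ℝ)+1)) ((n:ℝ)+1), HasDerivAt y (A x (y x)) x := by
    intro n
    have hRpos : (0:ℝ) < (n:ℝ)+1 := by positivity
    obtain ⟨y, hyc, hy⟩ := linODE_exists_Icc hA hRpos v₀
    have hn0 : (0:ℝ) ≤ (n:ℝ) := Nat.cast_nonneg n
    have h0mem : (0:ℝ) ∈ Icc (-((n:ℝ)+1)) ((n:ℝ)+1) :=
      mem_Icc.mpr ⟨by linarith, by linarith⟩
    have hy0 : y 0 = v₀ := by
      rw [hy 0 h0mem]; simp
    refine ⟨y, hy0, ?_⟩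
    intro x hx
    have hg : Continuous fun s => A s (y s) := hA.clm_apply hyc
    have hP : HasDerivAt (fun t => v₀ + ∫ s in (0:ℝ)..t, A s (y s)) (A x (y x)) x := by
      refine HasDerivAt.const_add _ ?_
      exact intervalIntegral.integral_hasDerivAt_right (hg.intervalIntegrable _ _)
        (hg.stronglyMeasurable.stronglyMeasurableAtFilter) hg.continuousAt
    refine hP.congr_of_eventuallyEq ?_
    have hmem : Ioo (-((n:ℝ)+1)) ((n:ℝ)+1) ∈ 𝓝 x := Ioo_mem_nhds hx.1 hx.2
    filter_upwards [hmem] with t ht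
    exact hy t (Ioo_subset_Icc_self ht)
  choose sol h0 hsol using H
  have agree : ∀ (n k : ℕ) (x : ℝ), |x| < (n:ℝ)+1 → |x| < (k:ℝ)+1 → sol n x = sol k x := by
    intro n k x h1 h2
    set R : ℝ := min ((n:ℝ)+1) ((k:ℝ)+1) with hRdef
    have hRpos : 0 < R := by positivity
    have hsub1 : Ioo (-R) R ⊆ Ioo (-((n:ℝ)+1)) ((n:ℝ)+1) :=
      Ioo_subset_Ioo (by simp [hRdef]) (min_le_left _ _)
    have hsub2 : Ioo (-R) R ⊆ Ioo (-((k:ℝ)+1)) ((k:ℝ)+1) :=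
      Ioo_subset_Ioo (by simp [hRdef]) (min_le_right _ _)
    have := linODE_unique_Ioo hA hRpos
      (fun t ht => hsol n t (hsub1 ht)) (fun t ht => hsol k t (hsub2 ht))
      ((h0 n).trans (h0 k).symm)
    apply this
    rw [mem_Ioo, ← abs_lt]
    exact lt_min h1 h2
  refine ⟨fun x => sol ⌊|x|⌋₊ x, ?_, ?_⟩
  · simpa using h0 0
  · intro x
    set n := ⌊|x|⌋₊ with hn
    have hx : |x| < (n:ℝ)+1 := Nat.lt_floor_add_one _
    have hloc : (fun x' => sol ⌊|x'|⌋₊ x') =ᶠ[𝓝 x] sol n := by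
      have hmem : Ioo (-((n:ℝ)+1)) ((n:ℝ)+1) ∈ 𝓝 x := by
        apply Ioo_mem_nhds
        · linarith [neg_abs_le x]
        · linarith [le_abs_self x]
      filter_upwards [hmem] with t ht
      exact agree _ n t (Nat.lt_floor_add_one _) (abs_lt.2 ⟨ht.1, ht.2⟩)
    have hder : HasDerivAt (sol n) (A x (sol n x)) x :=
      hsol n x (by rw [mem_Ioo, ← abs_lt]; exact hx)
    have : HasDerivAt (fun x' => sol ⌊|x'|⌋₊ x') (A x (sol n x)) x :=
      hder.congr_of_eventuallyEq hloc
    simpa [← hn] using this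

theorem linODE_unique {A : ℝ → E →L[ℝ] E} (hA : Continuous A) {y z : ℝ → E}
    (hy : ∀ x, HasDerivAt y (A x (y x)) x) (hz : ∀ x, HasDerivAt z (A x (z x)) x)
    (h0 : y 0 = z 0) : y = z := by
  funext x
  have hRpos : (0:ℝ) < |x| + 1 := by positivity
  exact linODE_unique_Ioo hA hRpos (fun t _ => hy t) (fun t _ => hz t) h0
    (by rw [mem_Ioo, ← abs_lt]; linarith [le_abs_self x, neg_abs_le x])

theorem linODE_smooth {A : ℝ → E →L[ℝ] E} (hA : ContDiff ℝ (⊤:ℕ∞) A) {y : ℝ → E}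
    (hy : ∀ x, HasDerivAt y (A x (y x)) x) : ContDiff ℝ (⊤:ℕ∞) y := by
  have hyd : Differentiable ℝ y := fun x => (hy x).differentiableAt
  have hderiv : deriv y = fun x => A x (y x) := funext fun x => (hy x).deriv
  have main : ∀ n : ℕ, ContDiff ℝ (n:ℕ∞) y := by
    intro n
    induction n with
    | zero => simpa [contDiff_zero] using hyd.continuous
    | succ n ih =>
      have h1 : ContDiff ℝ ((n : WithTop ℕ∞) + 1) y := by
        rw [contDiff_succ_iff_deriv]
        refine ⟨hyd, by simp, ?_⟩
        rw [hderiv]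
        refine (hA.of_le (by exact_mod_cast le_top)).clm_apply ?_
        exact_mod_cast ih
      exact_mod_cast h1
  rw [contDiff_infty]
  intro n
  exact_mod_cast main n

/-- Main packaged theorem: global existence, uniqueness and smoothness for
linear ODEs `y' = A x (y x)` with smooth coefficients. -/
theorem linODE_main {A : ℝ → E →L[ℝ] E} (hA : ContDiff ℝ (⊤:ℕ∞) A) (v₀ : E) :
    ∃ y : ℝ → E, ContDiff ℝ (⊤:ℕ∞) y ∧ y 0 = v₀ ∧ ∀ x, HasDerivAt y (A x (y x)) x := by
  obtain ⟨y, hy0, hy⟩ := linODE_exists hA.continuous v₀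
  exact ⟨y, linODE_smooth hA hy, hy0, hy⟩

section Bridge

variable {d : ℕ}

theorem linODE_pi (G : ℝ → (Fin d → ℝ) → (Fin d → ℝ))
    (hGlin : ∀ x, IsLinearMap ℝ (G x))
    (hGs : ∀ w : Fin d → ℝ, ContDiff ℝ (⊤:ℕ∞) (fun x => G x w)) :
    (∀ v₀ : Fin d → ℝ, ∃ y : ℝ → (Fin d → ℝ), ContDiff ℝ (⊤:ℕ∞) y ∧ y 0 = v₀ ∧
      ∀ x, HasDerivAt y (G x (y x)) x) ∧
    (∀ y z : ℝ → (Fin d → ℝ), (∀ x, HasDerivAt y (G x (y x)) x) →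
      (∀ x, HasDerivAt z (G x (z x)) x) → y 0 = z 0 → y = z) := by
  classical
  set A : ℝ → (Fin d → ℝ) →L[ℝ] (Fin d → ℝ) :=
    fun x => LinearMap.toContinuousLinearMap (IsLinearMap.mk' (G x) (hGlin x)) with hA
  have hAapp : ∀ x w, A x w = G x w := fun x w => rfl
  have hAsmooth : ContDiff ℝ (⊤:ℕ∞) A := by
    set b := Pi.basisFun ℝ (Fin d) with hb
    set Φ₁ : (Fin d → (Fin d → ℝ)) →ₗ[ℝ] ((Fin d → ℝ) →ₗ[ℝ] (Fin d → ℝ)) :=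
      (b.constr ℝ).toLinearMap with hΦ₁
    set Φ : (Fin d → (Fin d → ℝ)) →ₗ[ℝ] ((Fin d → ℝ) →L[ℝ] (Fin d → ℝ)) :=
      ((LinearMap.toContinuousLinearMap :
        ((Fin d → ℝ) →ₗ[ℝ] (Fin d → ℝ)) ≃ₗ[ℝ] ((Fin d → ℝ) →L[ℝ] (Fin d → ℝ))).toLinearMap).comp
        Φ₁ with hΦ
    set Φc := LinearMap.toContinuousLinearMap Φ with hΦc
    have hkey : A = fun x => Φc (fun j => G x (b j)) := by
      funext x
      have h1 : b.constr ℝ (fun j => G x (b j)) = IsLinearMap.mk' (G x) (hGlin x) := by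
        apply b.ext
        intro i
        rw [Module.Basis.constr_basis]
        rfl
      show A x = Φ (fun j => G x (b j))
      rw [hΦ]
      simp only [LinearMap.comp_apply, LinearEquiv.coe_coe]
      rw [hΦ₁]
      simp only [LinearEquiv.coe_coe]
      rw [h1]
    rw [hkey]
    exact Φc.contDiff.comp (contDiff_pi.2 fun j => hGs (b j))
  constructor
  · intro v₀
    obtain ⟨y, hys, hy0, hy⟩ := linODE_main hAsmooth v₀
    exact ⟨y, hys, hy0, fun x => by rw [← hAapp]; exact hy x⟩
  · intro y z hy hz h0
    exact linODE_unique hAsmooth.continuous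
      (fun x => by rw [hAapp]; exact hy x) (fun x => by rw [hAapp]; exact hz x) h0

end Bridge

end OdeCore

namespace SL
open TrivSqZeroExt

/-- evaluation at a point as an algebra hom -/
def evx (x : ℝ) : SmoothR →ₐ[ℝ] ℝ := (Pi.evalAlgHom ℝ (fun _ => ℝ) x).comp SmoothR.val

@[simp] lemma evx_apply (x : ℝ) (f : SmoothR) : evx x f = (f : ℝ → ℝ) x := rfl

example : CommRing SuperA := inferInstance

@[simp] lemma fst_D (u : SuperA) : fst (D u) = snd u := by
  simp [D]

@[simp] lemma snd_D (u : SuperA) : snd (D u) = derivSm (fst u) := by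
  simp [D]

lemma Dpow_succ (k : ℕ) (ψ : SuperA) : (D ^ (k+1)) ψ = D ((D ^ k) ψ) := by
  rw [pow_succ']
  rfl

lemma fst_Dpow_succ (k : ℕ) (ψ : SuperA) : fst ((D ^ (k+1)) ψ) = snd ((D ^ k) ψ) := by
  rw [Dpow_succ]; simp

lemma snd_Dpow_succ (k : ℕ) (ψ : SuperA) :
    snd ((D ^ (k+1)) ψ) = derivSm (fst ((D ^ k) ψ)) := by
  rw [Dpow_succ]; simp

lemma fst_mul' (u v : SuperA) : fst (u * v) = fst u * fst v := rfl

lemma snd_mul' (u v : SuperA) : snd (u * v) = fst u * snd v + fst v * snd u := by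
  rw [snd_mul]
  simp [smul_eq_mul]
  ring

lemma hasDerivAt_smoothR (f : SmoothR) (x : ℝ) :
    HasDerivAt (f : ℝ → ℝ) ((derivSm f : ℝ → ℝ) x) x := by
  have h := (SmoothR.differentiable f x).hasDerivAt
  simpa [derivSm] using h

/-- the jet-evaluation linear map -/
def jet (m : ℕ) : SuperA →ₗ[ℝ] (Fin m → ℝ) where
  toFun ψ := fun k => ((fst ((D ^ (k:ℕ)) ψ) : SmoothR) : ℝ → ℝ) 0
  map_add' ψ φ := by
    funext k
    simp [map_add]
  map_smul' r ψ := by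
    funext k
    simp [map_smul]

@[simp] lemma jet_apply (m : ℕ) (ψ : SuperA) (k : Fin m) :
    jet m ψ k = ((fst ((D ^ (k:ℕ)) ψ) : SmoothR) : ℝ → ℝ) 0 := rfl

end SL

namespace SL
open TrivSqZeroExt Finset

variable {m : ℕ} (a : Fin (m+1) → SuperA)

/-- reduced coefficients `c i = -a_m⁻¹ a_i` -/
def cc (a : Fin (m+1) → SuperA) : Fin m → SuperA :=
  fun i => -(Ring.inverse (a (Fin.last m)) * a i.castSucc)

def pp (a : Fin (m+1) → SuperA) : Fin m → SmoothR := fun i => fst (cc a i)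
def qq (a : Fin (m+1) → SuperA) : Fin m → SmoothR := fun i => snd (cc a i)

/-- `S₀` applied to a vector of smooth functions -/
def WM (a : Fin (m+1) → SuperA) (W : Fin m → SmoothR) : SmoothR :=
  ∑ i : Fin m, pp a i * W i

/-- extended jet sequence -/
def Wext (a : Fin (m+1) → SuperA) (W : Fin m → SmoothR) : ℕ → SmoothR := fun k =>
  if h : k < m then W ⟨k, h⟩
  else if k = m then WM a W
  else ∑ i : Fin m, (pp a i * (if h2 : (i:ℕ)+1 < m then W ⟨(i:ℕ)+1, h2⟩ else WM a W)
    + qq a i * W i)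

lemma Wext_lt {k : ℕ} (h : k < m) (W : Fin m → SmoothR) : Wext a W k = W ⟨k, h⟩ :=
  dif_pos h

lemma Wext_m (W : Fin m → SmoothR) : Wext a W m = WM a W := by
  simp [Wext]

lemma Wext_succ_plus (W : Fin m → SmoothR) {i : Fin m} :
    Wext a W ((i:ℕ)+1) = if h2 : (i:ℕ)+1 < m then W ⟨(i:ℕ)+1, h2⟩ else WM a W := by
  by_cases h2 : (i:ℕ)+1 < m
  · rw [Wext_lt a h2, dif_pos h2]
  · have : (i:ℕ)+1 = m := by omega
    rw [dif_neg h2, this, Wext_m]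

lemma Wext_succ_m (W : Fin m → SmoothR) :
    Wext a W (m+1) = ∑ i : Fin m, (pp a i * Wext a W ((i:ℕ)+1) + qq a i * W i) := by
  have h1 : ¬ (m+1 < m) := by omega
  have h2 : ¬ (m+1 = m) := by omega
  rw [Wext, dif_neg h1, if_neg h2]
  apply Finset.sum_congr rfl
  intro i _
  rw [Wext_succ_plus]

lemma Wext_zero (k : ℕ) : Wext a (fun _ => 0) k = 0 := by
  unfold Wext WM
  split
  · rfl
  · split <;> simp

/-- value-level `S₀` -/
def GM (a : Fin (m+1) → SuperA) (x : ℝ) (Y : Fin m → ℝ) : ℝ :=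
  ∑ i : Fin m, (pp a i : ℝ → ℝ) x * Y i

/-- value-level right-hand side of the first-order ODE system -/
def G (a : Fin (m+1) → SuperA) (x : ℝ) (Y : Fin m → ℝ) : Fin m → ℝ := fun k =>
  if h : (k:ℕ)+2 < m then Y ⟨(k:ℕ)+2, h⟩
  else if (k:ℕ)+2 = m then GM a x Y
  else ∑ i : Fin m, ((pp a i : ℝ → ℝ) x * (if h2 : (i:ℕ)+1 < m then Y ⟨(i:ℕ)+1, h2⟩
    else GM a x Y) + (qq a i : ℝ → ℝ) x * Y i)

/-- evaluation of `Wext` matches `G` -/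
lemma evx_Wext (W : Fin m → SmoothR) (x : ℝ) (k : Fin m) :
    evx x (Wext a W ((k:ℕ)+2)) = G a x (fun j => evx x (W j)) k := by
  have hWM : evx x (WM a W) = GM a x (fun j => evx x (W j)) := by
    rw [WM, GM, map_sum]
    apply Finset.sum_congr rfl
    intro i _
    rw [map_mul]
    rfl
  by_cases h : (k:ℕ)+2 < m
  · rw [Wext_lt a h, G, dif_pos h]
  · by_cases h2 : (k:ℕ)+2 = m
    · rw [G, dif_neg h, if_pos h2, h2, Wext_m, hWM]
    · have h3 : ¬ ((k:ℕ)+2 < m) := h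
      have h4 : m ≤ (k:ℕ)+1 := by omega
      have h5 : (k:ℕ)+2 = m+1 := by omega
      rw [h5, Wext_succ_m, G, dif_neg h, if_neg h2, map_sum]
      apply Finset.sum_congr rfl
      intro i _
      rw [map_add, map_mul, map_mul, Wext_succ_plus]
      by_cases h6 : (i:ℕ)+1 < m
      · rw [dif_pos h6, dif_pos h6]
        rfl
      · rw [dif_neg h6, dif_neg h6, hWM]
        rfl

/-- `G x` is linear in `Y` -/
lemma G_linear (x : ℝ) : IsLinearMap ℝ (G a x) := by
  constructor
  · intro Y Z
    funext k
    have hWM : GM a x (Y + Z) = GM a x Y + GM a x Z := by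
      rw [GM, GM, GM, ← Finset.sum_add_distrib]
      apply Finset.sum_congr rfl
      intro i _
      simp [Pi.add_apply]
      ring
    simp only [G, Pi.add_apply]
    split
    · rfl
    · split
      · exact hWM
      · rw [← Finset.sum_add_distrib]
        apply Finset.sum_congr rfl
        intro i _
        split
        · ring
        · rw [hWM]; ring
  · intro r Y
    funext k
    have hWM : GM a x (r • Y) = r * GM a x Y := by
      rw [GM, GM, Finset.mul_sum]
      apply Finset.sum_congr rfl
      intro i _
      simp [Pi.smul_apply, smul_eq_mul]
      ring
    simp only [G, Pi.smul_apply, smul_eq_mul]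
    split
    · rfl
    · split
      · exact hWM
      · rw [Finset.mul_sum]
        apply Finset.sum_congr rfl
        intro i _
        split
        · ring
        · rw [hWM]; ring

/-- `x ↦ G x w` is smooth for fixed `w` -/
lemma G_smooth (w : Fin m → ℝ) : ContDiff ℝ (⊤:ℕ∞) (fun x => G a x w) := by
  have hWM : ContDiff ℝ (⊤:ℕ∞) (fun x => GM a x w) := by
    apply ContDiff.sum
    intro i _
    exact (SmoothR.contDiff (pp a i)).mul contDiff_const
  rw [contDiff_pi]
  intro k
  simp only [G]
  split
  · exact contDiff_const
  · split
    · exact hWM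
    · apply ContDiff.sum
      intro i _
      apply ContDiff.add
      · apply ContDiff.mul (SmoothR.contDiff (pp a i))
        split
        · exact contDiff_const
        · exact hWM
      · exact (SmoothR.contDiff (qq a i)).mul contDiff_const

end SL

namespace SL
open TrivSqZeroExt Finset

variable {m : ℕ} (a : Fin (m+1) → SuperA)

lemma L_apply (ψ : SuperA) :
    (∑ i : Fin (m+1), mulOp (a i) * D ^ (i:ℕ)) ψ
      = ∑ i : Fin (m+1), a i * ((D ^ (i:ℕ)) ψ) := by
  rw [LinearMap.sum_apply]
  apply Finset.sum_congr rfl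
  intro i _
  rw [Module.End.mul_apply]
  rfl

lemma ker_rec (htop : IsUnit (a (Fin.last m))) (ψ : SuperA)
    (hψ : (∑ i : Fin (m+1), mulOp (a i) * D ^ (i:ℕ)) ψ = 0) :
    (D ^ m) ψ = ∑ i : Fin m, cc a i * ((D ^ (i:ℕ)) ψ) := by
  have h : ∑ i : Fin (m+1), a i * ((D ^ (i:ℕ)) ψ) = 0 := by
    rw [← L_apply]; exact hψ
  rw [Fin.sum_univ_castSucc] at h
  simp only [Fin.coe_castSucc, Fin.val_last] at h
  have h2 : a (Fin.last m) * (D ^ m) ψ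
      = -∑ i : Fin m, a i.castSucc * ((D ^ (i:ℕ)) ψ) :=
    (by rw [add_comm] at h; exact eq_neg_of_add_eq_zero_left h)
  have h3 : (D ^ m) ψ = Ring.inverse (a (Fin.last m)) * (a (Fin.last m) * (D ^ m) ψ) := by
    rw [← mul_assoc, Ring.inverse_mul_cancel _ htop, one_mul]
  have h4 : ∀ i : Fin m, cc a i * ((D ^ (i:ℕ)) ψ)
      = Ring.inverse (a (Fin.last m)) * -(a i.castSucc * ((D ^ (i:ℕ)) ψ)) := by
    intro i
    rw [cc]
    ring
  calc (D ^ m) ψ = Ring.inverse (a (Fin.last m)) * (a (Fin.last m) * (D ^ m) ψ) := h3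
    _ = Ring.inverse (a (Fin.last m)) * -∑ i : Fin m, a i.castSucc * ((D ^ (i:ℕ)) ψ) := by
        rw [h2]
    _ = ∑ i : Fin m, cc a i * ((D ^ (i:ℕ)) ψ) := by
        rw [Finset.sum_congr rfl (fun i _ => h4 i), ← Finset.mul_sum,
          ← Finset.sum_neg_distrib]

lemma ker_fst_eq (ψ : SuperA)
    (hrec : (D ^ m) ψ = ∑ i : Fin m, cc a i * ((D ^ (i:ℕ)) ψ)) :
    ∀ j ≤ m + 1, fst ((D ^ j) ψ) = Wext a (fun i => fst ((D ^ (i:ℕ)) ψ)) j := by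
  set W : Fin m → SmoothR := fun i => fst ((D ^ (i:ℕ)) ψ) with hW
  have hm : fst ((D ^ m) ψ) = Wext a W m := by
    rw [Wext_m, hrec, fst_sum, WM]
    apply Finset.sum_congr rfl
    intro i _
    rw [fst_mul']
    rfl
  have hle : ∀ j (h : j ≤ m), fst ((D ^ j) ψ) = Wext a W j := by
    intro j hj
    rcases lt_or_eq_of_le hj with h | h
    · rw [Wext_lt a h]
    · subst h; exact hm
  intro j hj
  rcases Nat.lt_or_ge j (m+1) with h | h
  · exact hle j (by omega)
  · have hj1 : j = m + 1 := by omega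
    subst hj1
    rw [fst_Dpow_succ, hrec, snd_sum, Wext_succ_m]
    apply Finset.sum_congr rfl
    intro i _
    rw [snd_mul']
    have h1 : snd ((D ^ (i:ℕ)) ψ) = fst ((D ^ ((i:ℕ)+1)) ψ) := (fst_Dpow_succ _ _).symm
    rw [h1, hle ((i:ℕ)+1) i.2]
    show pp a i * Wext a W ((i:ℕ)+1) + W i * qq a i = _
    ring

lemma ker_hasDeriv (ψ : SuperA)
    (hrec : (D ^ m) ψ = ∑ i : Fin m, cc a i * ((D ^ (i:ℕ)) ψ)) (x : ℝ) :
    HasDerivAt (fun t => fun k : Fin m => evx t (fst ((D ^ (k:ℕ)) ψ)))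
      (G a x (fun k => evx x (fst ((D ^ (k:ℕ)) ψ)))) x := by
  set W : Fin m → SmoothR := fun i => fst ((D ^ (i:ℕ)) ψ) with hW
  rw [hasDerivAt_pi]
  intro k
  have h1 : HasDerivAt (fun t => evx t (W k)) ((derivSm (W k) : ℝ → ℝ) x) x :=
    hasDerivAt_smoothR (W k) x
  have h2 : derivSm (W k) = Wext a W ((k:ℕ)+2) := by
    have e1 : derivSm (fst ((D ^ (k:ℕ)) ψ)) = snd ((D ^ ((k:ℕ)+1)) ψ) :=
      (snd_Dpow_succ _ _).symm
    have e2 : snd ((D ^ ((k:ℕ)+1)) ψ) = fst ((D ^ ((k:ℕ)+2)) ψ) := (fst_Dpow_succ _ _).symm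
    rw [hW]
    rw [e1, e2]
    exact ker_fst_eq a ψ hrec ((k:ℕ)+2) (by omega)
  have h3 : ((derivSm (W k) : ℝ → ℝ)) x = G a x (fun j => evx x (W j)) k := by
    have := evx_Wext a W x k
    rw [← h2] at this
    exact this
  rw [← h3]
  exact h1

theorem build_psi (htop : IsUnit (a (Fin.last m))) (y : ℝ → (Fin m → ℝ))
    (hy : ContDiff ℝ (⊤:ℕ∞) y)
    (hODE : ∀ x, HasDerivAt y (G a x (y x)) x) :
    ∃ ψ : SuperA, (∑ i : Fin (m+1), mulOp (a i) * D ^ (i:ℕ)) ψ = 0 ∧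
      jet m ψ = y 0 := by
  set W : Fin m → SmoothR := fun k => ⟨fun x => y x k, contDiff_pi.mp hy k⟩ with hWdef
  have hevW : ∀ x k, evx x (W k) = y x k := fun x k => rfl
  have hder : ∀ (k : Fin m), derivSm (W k) = Wext a W ((k:ℕ)+2) := by
    intro k
    apply Subtype.ext
    funext x
    have hcomp := hasDerivAt_pi.mp (hODE x) k
    have hd : deriv (fun t => y t k) x = G a x (y x) k := hcomp.deriv
    show deriv (fun t => y t k) x = _
    rw [hd]
    have h7 := evx_Wext a W x k
    have h8 : (fun j => evx x (W j)) = y x := rfl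
    rw [h8] at h7
    exact h7.symm
  set ψ : SuperA := inl (Wext a W 0) + inr (Wext a W 1) with hψdef
  have hfst0 : fst ψ = Wext a W 0 := by rw [hψdef]; simp
  have hsnd0 : snd ψ = Wext a W 1 := by rw [hψdef]; simp
  have Ind : ∀ k, k ≤ m → fst ((D ^ k) ψ) = Wext a W k ∧ snd ((D ^ k) ψ) = Wext a W (k+1) := by
    intro k
    induction k with
    | zero => intro _; exact ⟨hfst0, hsnd0⟩
    | succ k ih =>
      intro hk
      obtain ⟨ihf, ihs⟩ := ih (by omega)
      constructor
      · rw [fst_Dpow_succ, ihs]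
      · rw [snd_Dpow_succ, ihf]
        have hkm : k < m := by omega
        rw [Wext_lt a hkm, hder ⟨k, hkm⟩]
  have hrec : (D ^ m) ψ = ∑ i : Fin m, cc a i * ((D ^ (i:ℕ)) ψ) := by
    apply TrivSqZeroExt.ext
    · rw [(Ind m le_rfl).1, Wext_m, fst_sum, WM]
      apply Finset.sum_congr rfl
      intro i _
      rw [fst_mul', (Ind (i:ℕ) (by omega)).1, Wext_lt a i.2]
      rfl
    · rw [(Ind m le_rfl).2, Wext_succ_m, snd_sum]
      apply Finset.sum_congr rfl
      intro i _
      rw [snd_mul', (Ind (i:ℕ) (by omega)).1, (Ind (i:ℕ) (by omega)).2, Wext_lt a i.2]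
      show pp a i * Wext a W ((i:ℕ)+1) + qq a i * W i
        = pp a i * Wext a W ((i:ℕ)+1) + W i * qq a i
      ring
  refine ⟨ψ, ?_, ?_⟩
  · rw [L_apply, Fin.sum_univ_castSucc]
    simp only [Fin.coe_castSucc, Fin.val_last]
    rw [hrec, Finset.mul_sum, ← Finset.sum_add_distrib]
    apply Finset.sum_eq_zero
    intro i _
    have hcancel : a (Fin.last m) * cc a i = -(a i.castSucc) := by
      have hmi : a (Fin.last m) * Ring.inverse (a (Fin.last m)) = 1 :=
        Ring.mul_inverse_cancel _ htop
      calc a (Fin.last m) * cc a i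
          = -((a (Fin.last m) * Ring.inverse (a (Fin.last m))) * a i.castSucc) := by
            rw [cc]; ring
        _ = -(a i.castSucc) := by rw [hmi, one_mul]
    calc a i.castSucc * ((D ^ (i:ℕ)) ψ) + a (Fin.last m) * (cc a i * ((D ^ (i:ℕ)) ψ))
        = a i.castSucc * ((D ^ (i:ℕ)) ψ) + (a (Fin.last m) * cc a i) * ((D ^ (i:ℕ)) ψ) := by
          ring
      _ = 0 := by rw [hcancel]; ring
  · funext k
    show evx 0 (fst ((D ^ (k:ℕ)) ψ)) = y 0 k
    rw [(Ind (k:ℕ) (by omega)).1, Wext_lt a k.2]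
    rfl

end SL

namespace SL
open TrivSqZeroExt Finset

variable {m : ℕ}

/-- the parity involution `σ(f₀ + ξf₁) = f₀ - ξf₁` -/
def sigma : Module.End ℝ SuperA where
  toFun ψ := inl (fst ψ) + inr (-snd ψ)
  map_add' ψ φ := by
    apply TrivSqZeroExt.ext <;> simp <;> abel
  map_smul' r ψ := by
    apply TrivSqZeroExt.ext <;> simp

@[simp] lemma fst_sigma (ψ : SuperA) : fst (sigma ψ) = fst ψ := by simp [sigma]
@[simp] lemma snd_sigma (ψ : SuperA) : snd (sigma ψ) = -snd ψ := by simp [sigma]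

lemma sigma_D (ψ : SuperA) : D (sigma ψ) = - sigma (D ψ) := by
  apply TrivSqZeroExt.ext <;> simp

lemma sigma_Dpow (k : ℕ) (ψ : SuperA) :
    (D ^ k) (sigma ψ) = ((-1:ℝ)^k) • sigma ((D ^ k) ψ) := by
  induction k with
  | zero => simp
  | succ k ih =>
    have h1 : (D ^ (k+1)) (sigma ψ) = D ((D ^ k) (sigma ψ)) := Dpow_succ k (sigma ψ)
    rw [h1, ih, map_smul, sigma_D, Dpow_succ k ψ, pow_succ, mul_smul,
      neg_one_smul ℝ (sigma (D ((D ^ k) ψ)))]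

lemma sigma_mul (x y : SuperA) : sigma (x * y) = sigma x * sigma y := by
  apply TrivSqZeroExt.ext
  · simp [fst_mul']
  · rw [snd_sigma, snd_mul', snd_mul', fst_sigma, fst_sigma, snd_sigma, snd_sigma]
    ring

lemma jet_sigma (ψ : SuperA) (k : Fin m) :
    jet m (sigma ψ) k = (-1:ℝ)^(k:ℕ) * jet m ψ k := by
  rw [jet_apply, jet_apply, sigma_Dpow]
  have h1 : fst (((-1:ℝ)^(k:ℕ)) • sigma ((D ^ (k:ℕ)) ψ))
      = ((-1:ℝ)^(k:ℕ)) • fst ((D ^ (k:ℕ)) ψ) := by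
    rw [fst_smul, fst_sigma]
  rw [h1]
  rfl

lemma sigma_of_even {ψ : SuperA} (h : snd ψ = 0) : sigma ψ = ψ := by
  apply TrivSqZeroExt.ext
  · simp
  · simp [h]

lemma sigma_of_odd {ψ : SuperA} (h : fst ψ = 0) : sigma ψ = -ψ := by
  apply TrivSqZeroExt.ext
  · simp [h]
  · simp

lemma eq_zero_of_neg_eq_self {M : Type*} [AddCommGroup M] [Module ℝ M] {x : M}
    (h : -x = x) : x = 0 := by
  have h2 : (2:ℝ) • x = 0 := by
    rw [two_smul]
    nth_rewrite 1 [← h]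
    simp
  exact (smul_eq_zero.mp h2).resolve_left (by norm_num)

lemma even_of_sigma_eq {ψ : SuperA} (h : sigma ψ = ψ) : snd ψ = 0 := by
  apply eq_zero_of_neg_eq_self
  rw [← snd_sigma, h]

lemma odd_of_sigma_eq_neg {ψ : SuperA} (h : sigma ψ = -ψ) : fst ψ = 0 := by
  apply eq_zero_of_neg_eq_self
  have h1 : fst (sigma ψ) = fst (-ψ) := by rw [h]
  rw [fst_sigma, fst_neg] at h1
  rw [← h1]

variable (a : Fin (m+1) → SuperA)

lemma sigma_coeff
    (hpar : ∀ i : Fin (m + 1),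
      if (m - (i : ℕ)) % 2 = 0 then SuperA.IsEven (a i) else SuperA.IsOdd (a i))
    (i : Fin (m+1)) : sigma (a i) = ((-1:ℝ)^(m - (i:ℕ))) • a i := by
  have h := hpar i
  by_cases hc : (m - (i:ℕ)) % 2 = 0
  · rw [if_pos hc] at h
    have he : Even (m - (i:ℕ)) := Nat.even_iff.mpr hc
    rw [he.neg_one_pow, one_smul]
    exact sigma_of_even h
  · rw [if_neg hc] at h
    have ho : Odd (m - (i:ℕ)) := Nat.odd_iff.mpr (by omega)
    rw [ho.neg_one_pow]
    rw [show ((-1:ℝ)) • a i = -(a i) from neg_one_smul ℝ (a i)]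
    exact sigma_of_odd h

lemma L_sigma
    (hpar : ∀ i : Fin (m + 1),
      if (m - (i : ℕ)) % 2 = 0 then SuperA.IsEven (a i) else SuperA.IsOdd (a i))
    (ψ : SuperA) :
    (∑ i : Fin (m+1), mulOp (a i) * D ^ (i:ℕ)) (sigma ψ)
      = ((-1:ℝ)^m) • sigma ((∑ i : Fin (m+1), mulOp (a i) * D ^ (i:ℕ)) ψ) := by
  rw [L_apply, L_apply, map_sum, Finset.smul_sum]
  apply Finset.sum_congr rfl
  intro i _
  have hi : (i:ℕ) ≤ m := by omega
  have key : ((-1:ℝ))^(m - (i:ℕ)) * (-1)^(i:ℕ) = (-1)^m := by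
    rw [← pow_add, Nat.sub_add_cancel hi]
  have sq : ((-1:ℝ))^(m - (i:ℕ)) * (-1)^(m - (i:ℕ)) = 1 := by
    rw [← pow_add]
    exact Even.neg_one_pow ⟨m - (i:ℕ), rfl⟩
  calc a i * ((D ^ (i:ℕ)) (sigma ψ))
      = a i * (((-1:ℝ)^(i:ℕ)) • sigma ((D ^ (i:ℕ)) ψ)) := by rw [sigma_Dpow]
    _ = ((-1:ℝ)^(i:ℕ)) • (a i * sigma ((D ^ (i:ℕ)) ψ)) := (mul_smul_comm _ _ _)
    _ = ((-1:ℝ)^m) • sigma (a i * ((D ^ (i:ℕ)) ψ)) := by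
        rw [sigma_mul, sigma_coeff a hpar i, smul_mul_assoc, smul_smul]
        congr 1
        rw [← key]
        linear_combination (-((-1:ℝ)^((i:ℕ)))) * sq

end SL

namespace SL
open Finset

lemma card_range_filter_even (m : ℕ) :
    ((Finset.range m).filter (fun k => k % 2 = 0)).card = (m+1)/2 := by
  induction m with
  | zero => simp
  | succ m ih =>
    rw [Finset.range_add_one, Finset.filter_insert]
    by_cases h : m % 2 = 0
    · rw [if_pos h, Finset.card_insert_of_notMem (by simp)]
      omega
    · rw [if_neg h]
      omega

lemma card_range_filter_odd (m : ℕ) :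
    ((Finset.range m).filter (fun k => k % 2 = 1)).card = m/2 := by
  induction m with
  | zero => simp
  | succ m ih =>
    rw [Finset.range_add_one, Finset.filter_insert]
    by_cases h : m % 2 = 1
    · rw [if_pos h, Finset.card_insert_of_notMem (by simp)]
      omega
    · rw [if_neg h]
      omega

lemma card_fin_even (m : ℕ) :
    Fintype.card {k : Fin m // (k:ℕ) % 2 = 0} = (m+1)/2 := by
  rw [Fintype.card_subtype]
  rw [← card_range_filter_even m]
  rw [Finset.card_filter, Finset.card_filter]
  exact Fin.sum_univ_eq_sum_range (fun k => if k % 2 = 0 then 1 else 0) m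

lemma card_fin_odd (m : ℕ) :
    Fintype.card {k : Fin m // (k:ℕ) % 2 = 1} = m/2 := by
  rw [Fintype.card_subtype]
  rw [← card_range_filter_odd m]
  rw [Finset.card_filter, Finset.card_filter]
  exact Fin.sum_univ_eq_sum_range (fun k => if k % 2 = 1 then 1 else 0) m

end SL

set_option maxHeartbeats 4000000

open TrivSqZeroExt SL in
/-- the kernel of a nondegenerate operator of order `m` has real
dimension `m`; if moreover the coefficient `aᵢ` is homogeneous of parity
`m − i (mod 2)`, then `dim Ker L = n|n` for `m = 2n` and `(n+1)|n` for
`m = 2n + 1`. -/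
theorem ker_dimension_of_nondeg
    (L : Module.End ℝ SuperA) (m : ℕ) (a : Fin (m + 1) → SuperA)
    (hL : L = ∑ i : Fin (m + 1), mulOp (a i) * D ^ (i : ℕ))
    (htop : IsUnit (a (Fin.last m))) :
    (FiniteDimensional ℝ (LinearMap.ker L) ∧
      Module.finrank ℝ (LinearMap.ker L) = m) ∧
    ((∀ i : Fin (m + 1),
        if (m - (i : ℕ)) % 2 = 0 then SuperA.IsEven (a i) else SuperA.IsOdd (a i)) →
      Module.finrank ℝ ↥(LinearMap.ker L ⊓ evenPart) = (m + 1) / 2 ∧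
      Module.finrank ℝ ↥(LinearMap.ker L ⊓ oddPart) = m / 2) := by
  obtain ⟨hEx, hUniq⟩ := linODE_pi (G a) (G_linear a) (G_smooth a)
  -- jet is injective on the kernel
  have hjetinj : ∀ ψ : SuperA, L ψ = 0 → jet m ψ = 0 → ψ = 0 := by
    intro ψ hψ hjet
    rw [hL] at hψ
    have hrec := ker_rec a htop ψ hψ
    have hzero : ∀ x, HasDerivAt (fun _ : ℝ => (0 : Fin m → ℝ)) (G a x 0) x := by
      intro x
      have h0 : G a x 0 = 0 := (G_linear a x).map_zero
      rw [h0]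
      exact hasDerivAt_const x (0 : Fin m → ℝ)
    have h00 : (fun t => fun k : Fin m => evx t (fst ((D ^ (k:ℕ)) ψ))) 0
        = (fun _ : ℝ => (0 : Fin m → ℝ)) 0 := by
      funext k
      exact congrFun hjet k
    have huniq := hUniq (fun t => fun k : Fin m => evx t (fst ((D ^ (k:ℕ)) ψ)))
      (fun _ => 0) (fun x => ker_hasDeriv a ψ hrec x) hzero h00
    have hfst : ∀ j : ℕ, j ≤ m + 1 → fst ((D ^ j) ψ) = 0 := by
      have hW : (fun i : Fin m => fst ((D ^ (i:ℕ)) ψ)) = (fun _ => (0 : SmoothR)) := by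
        funext i
        apply Subtype.ext
        funext x
        exact congrFun (congrFun huniq x) i
      intro j hj
      rw [ker_fst_eq a ψ hrec j hj, hW, Wext_zero]
    apply TrivSqZeroExt.ext
    · have h0 := hfst 0 (by omega)
      simpa using h0
    · have h1 := hfst 1 (by omega)
      rw [pow_one, fst_D] at h1
      simpa using h1
  -- jet is surjective from the kernel
  have hjetsurj : ∀ v : Fin m → ℝ, ∃ ψ : SuperA, L ψ = 0 ∧ jet m ψ = v := by
    intro v
    obtain ⟨y, hys, hy0, hyODE⟩ := hEx v
    obtain ⟨ψ, hLψ, hjet⟩ := build_psi a htop y hys hyODE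
    refine ⟨ψ, by rw [hL]; exact hLψ, by rw [hjet, hy0]⟩
  -- the jet equivalence on the kernel
  set E' : ↥(LinearMap.ker L) →ₗ[ℝ] (Fin m → ℝ) :=
    (jet m).comp (LinearMap.ker L).subtype with hE'
  have hbij : Function.Bijective E' := by
    constructor
    · intro ψ φ h
      apply Subtype.ext
      have hmem : L ((ψ:SuperA) - (φ:SuperA)) = 0 := by
        rw [map_sub, LinearMap.mem_ker.mp ψ.2, LinearMap.mem_ker.mp φ.2, sub_self]
      have hjd : jet m ((ψ:SuperA) - (φ:SuperA)) = 0 := by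
        rw [map_sub]
        rw [show jet m (ψ:SuperA) = jet m (φ:SuperA) from h, sub_self]
      exact sub_eq_zero.mp (hjetinj _ hmem hjd)
    · intro v
      obtain ⟨ψ, hLψ, hjet⟩ := hjetsurj v
      exact ⟨⟨ψ, LinearMap.mem_ker.mpr hLψ⟩, hjet⟩
  have eqv : ↥(LinearMap.ker L) ≃ₗ[ℝ] (Fin m → ℝ) := LinearEquiv.ofBijective E' hbij
  have hfd : FiniteDimensional ℝ ↥(LinearMap.ker L) := Module.Finite.equiv eqv.symm
  refine ⟨⟨hfd, ?_⟩, ?_⟩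
  · rw [LinearEquiv.finrank_eq eqv, Module.finrank_fintype_fun_eq_card, Fintype.card_fin]
  · intro hpar
    have hσker : ∀ ψ : SuperA, L ψ = 0 → L (sigma ψ) = 0 := by
      intro ψ hψ
      rw [hL] at hψ ⊢
      rw [L_sigma a hpar ψ, hψ, map_zero, smul_zero]
    constructor
    · -- even part
      set Φp : ↥(LinearMap.ker L ⊓ evenPart) →ₗ[ℝ] ({k : Fin m // (k:ℕ) % 2 = 0} → ℝ) :=
        { toFun := fun ψ => fun k => jet m (ψ:SuperA) k.1
          map_add' := by
            intro ψ φ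
            funext k
            simp [map_add]
          map_smul' := by
            intro r ψ
            funext k
            simp [map_smul] } with hΦp
      have hΦbij : Function.Bijective Φp := by
        constructor
        · intro ψ φ h
          apply Subtype.ext
          set χ : SuperA := (ψ:SuperA) - (φ:SuperA) with hχ
          have hLχ : L χ = 0 := by
            rw [hχ, map_sub, LinearMap.mem_ker.mp (Submodule.mem_inf.mp ψ.2).1,
              LinearMap.mem_ker.mp (Submodule.mem_inf.mp φ.2).1, sub_self]
          have hχeven : snd χ = 0 := by
            have h1 : snd (ψ:SuperA) = 0 := (Submodule.mem_inf.mp ψ.2).2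
            have h2 : snd (φ:SuperA) = 0 := (Submodule.mem_inf.mp φ.2).2
            rw [hχ, snd_sub, h1, h2, sub_zero]
          have hjσ : ∀ k : Fin m, jet m χ k = (-1:ℝ)^(k:ℕ) * jet m χ k := by
            intro k
            conv_lhs => rw [← sigma_of_even hχeven]
            rw [jet_sigma]
          have hjχ : jet m χ = 0 := by
            funext k
            by_cases hk : (k:ℕ) % 2 = 0
            · have := congrFun h (⟨k, hk⟩ : {k : Fin m // (k:ℕ) % 2 = 0})
              show jet m χ k = 0
              rw [hχ, map_sub]
              exact sub_eq_zero.mpr this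
            · have hodd : Odd (k:ℕ) := Nat.odd_iff.mpr (by omega)
              have := hjσ k
              rw [hodd.neg_one_pow] at this
              show jet m χ k = 0
              linarith [this]
          exact sub_eq_zero.mp (hjetinj χ hLχ hjχ)
        · intro w
          obtain ⟨ψ₀, hL0, hjet0⟩ := hjetsurj
            (fun k => if h : (k:ℕ) % 2 = 0 then w ⟨k, h⟩ else 0)
          have hLχ : L (sigma ψ₀ - ψ₀) = 0 := by
            rw [map_sub, hσker ψ₀ hL0, hL0, sub_self]
          have hjχ : jet m (sigma ψ₀ - ψ₀) = 0 := by
            funext k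
            rw [map_sub]
            show jet m (sigma ψ₀) k - jet m ψ₀ k = 0
            rw [jet_sigma]
            simp only [hjet0]
            by_cases hk : (k:ℕ) % 2 = 0
            · have heven : Even (k:ℕ) := Nat.even_iff.mpr hk
              rw [heven.neg_one_pow, dif_pos hk]
              ring
            · rw [dif_neg hk]
              ring
          have hs : sigma ψ₀ = ψ₀ := sub_eq_zero.mp (hjetinj _ hLχ hjχ)
          have heven2 : snd ψ₀ = 0 := even_of_sigma_eq hs
          refine ⟨⟨ψ₀, Submodule.mem_inf.mpr ⟨LinearMap.mem_ker.mpr hL0, heven2⟩⟩, ?_⟩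
          funext k
          show jet m ψ₀ k.1 = w k
          simp only [hjet0]
          rw [dif_pos k.2]
      rw [LinearEquiv.finrank_eq (LinearEquiv.ofBijective Φp hΦbij),
        Module.finrank_fintype_fun_eq_card, card_fin_even]
    · -- odd part
      set Φm : ↥(LinearMap.ker L ⊓ oddPart) →ₗ[ℝ] ({k : Fin m // (k:ℕ) % 2 = 1} → ℝ) :=
        { toFun := fun ψ => fun k => jet m (ψ:SuperA) k.1
          map_add' := by
            intro ψ φ
            funext k
            simp [map_add]
          map_smul' := by
            intro r ψ
            funext k
            simp [map_smul] } with hΦm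
      have hΦbij : Function.Bijective Φm := by
        constructor
        · intro ψ φ h
          apply Subtype.ext
          set χ : SuperA := (ψ:SuperA) - (φ:SuperA) with hχ
          have hLχ : L χ = 0 := by
            rw [hχ, map_sub, LinearMap.mem_ker.mp (Submodule.mem_inf.mp ψ.2).1,
              LinearMap.mem_ker.mp (Submodule.mem_inf.mp φ.2).1, sub_self]
          have hχodd : fst χ = 0 := by
            have h1 : fst (ψ:SuperA) = 0 := (Submodule.mem_inf.mp ψ.2).2
            have h2 : fst (φ:SuperA) = 0 := (Submodule.mem_inf.mp φ.2).2
            rw [hχ, fst_sub, h1, h2, sub_zero]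
          have hjσ : ∀ k : Fin m, -jet m χ k = (-1:ℝ)^(k:ℕ) * jet m χ k := by
            intro k
            rw [← jet_sigma, sigma_of_odd hχodd, map_neg]
            rfl
          have hjχ : jet m χ = 0 := by
            funext k
            by_cases hk : (k:ℕ) % 2 = 1
            · have := congrFun h (⟨k, hk⟩ : {k : Fin m // (k:ℕ) % 2 = 1})
              show jet m χ k = 0
              rw [hχ, map_sub]
              exact sub_eq_zero.mpr this
            · have heven : Even (k:ℕ) := Nat.even_iff.mpr (by omega)
              have h5 := hjσ k
              rw [heven.neg_one_pow] at h5
              show jet m χ k = 0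
              linarith [h5]
          exact sub_eq_zero.mp (hjetinj χ hLχ hjχ)
        · intro w
          obtain ⟨ψ₀, hL0, hjet0⟩ := hjetsurj
            (fun k => if h : (k:ℕ) % 2 = 1 then w ⟨k, h⟩ else 0)
          have hLχ : L (sigma ψ₀ + ψ₀) = 0 := by
            rw [map_add, hσker ψ₀ hL0, hL0, add_zero]
          have hjχ : jet m (sigma ψ₀ + ψ₀) = 0 := by
            funext k
            rw [map_add]
            show jet m (sigma ψ₀) k + jet m ψ₀ k = 0
            rw [jet_sigma]
            simp only [hjet0]
            by_cases hk : (k:ℕ) % 2 = 1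
            · have hodd : Odd (k:ℕ) := Nat.odd_iff.mpr hk
              rw [hodd.neg_one_pow, dif_pos hk]
              ring
            · rw [dif_neg hk]
              ring
          have hs : sigma ψ₀ = -ψ₀ := by
            have := hjetinj _ hLχ hjχ
            rw [add_eq_zero_iff_eq_neg] at this
            exact this
          have hodd : fst ψ₀ = 0 := odd_of_sigma_eq_neg hs
          refine ⟨⟨ψ₀, Submodule.mem_inf.mpr ⟨LinearMap.mem_ker.mpr hL0, hodd⟩⟩, ?_⟩
          funext k
          show jet m ψ₀ k.1 = w k
          simp only [hjet0]
          rw [dif_pos k.2]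
      rw [LinearEquiv.finrank_eq (LinearEquiv.ofBijective Φm hΦbij),
        Module.finrank_fintype_fun_eq_card, card_fin_odd]


end
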